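/- arXiv:1902.00832 — 7 statements merged into one kernel-verified Lean document; each statement's English description precedes it below -/
import Mathlib

section
/- Let A be a symmetric d×d real matrix with operator norm ‖A‖₂ ≤ c for some c > 0, and let ε be a real number with 0 < ε ≤ 1/(2cd). Then |det(I + εA) − (1 + ε·tr(A) + (ε²/2)·((tr A)² − tr(A²)))| ≤ ε³·c³·d³. -/
/-!
Diagonalising the symmetric matrix `A` with eigenvalues `λᵢ`, the left-hand side becomes
`∏ (1 + xᵢ) - (1 + e₁ + e₂)` with `xᵢ = ε λᵢ`, `|xᵢ| ≤ εc`, where `e₁ = ∑ xᵢ` and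
`e₂ = ((∑ xᵢ)² - ∑ xᵢ²) / 2` are the first elementary symmetric functions. Adjoining one factor
`1 + x` multiplies this error by `1 + x` and adds `x e₂`, and `|e₂| ≤ (n t)² / 2` for `n` factors
bounded by `t`; so by induction the error stays below `(n t)³` as long as `n t ≤ 1`.
-/

/-- The operator norm of a `d × d` real matrix with respect to the Euclidean
norm on `ℝ^d`. -/
noncomputable def matOpNorm {d : ℕ} (A : Matrix (Fin d) (Fin d) ℝ) : ℝ :=
  ‖Matrix.toEuclideanCLM (𝕜 := ℝ) A‖

open Finset Matrix Unitary

section ElementarySymmetric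

variable {ι : Type*} (s : Finset ι) (x : ι → ℝ) {t : ℝ}

theorem abs_sq_sum_sub_sum_sq_le (hx : ∀ i ∈ s, |x i| ≤ t) :
    |(∑ i ∈ s, x i) ^ 2 - ∑ i ∈ s, x i ^ 2| ≤ (#s * t) ^ 2 := by
  have hsum : |∑ i ∈ s, x i| ≤ #s * t := by
    simpa using (abs_sum_le_sum_abs x s).trans (sum_le_card_nsmul s _ t hx)
  have hsq : ∑ i ∈ s, x i ^ 2 ≤ #s * t ^ 2 := by
    rw [← nsmul_eq_mul]
    exact sum_le_card_nsmul s _ _ fun i hi => by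
      simpa only [sq_abs] using pow_le_pow_left₀ (abs_nonneg _) (hx i hi) 2
  have hcard : (#s : ℝ) ≤ #s ^ 2 := mod_cast Nat.le_self_pow two_ne_zero _
  refine abs_sub_le_of_nonneg_of_le (sq_nonneg _) ?_ (sum_nonneg fun i _ => sq_nonneg _) ?_
  · simpa only [sq_abs] using pow_le_pow_left₀ (abs_nonneg _) hsum 2
  · nlinarith [sq_nonneg t]

theorem abs_prod_one_add_sub_le [DecidableEq ι] (hx : ∀ i ∈ s, |x i| ≤ t) (hst : #s * t ≤ 1) :
    |∏ i ∈ s, (1 + x i) -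
        (1 + ∑ i ∈ s, x i + ((∑ i ∈ s, x i) ^ 2 - ∑ i ∈ s, x i ^ 2) / 2)| ≤ (#s * t) ^ 3 := by
  induction s using Finset.induction_on with
  | empty => simp
  | insert a s ha ih =>
    have hxa : |x a| ≤ t := hx a (mem_insert_self a s)
    have ht : 0 ≤ t := (abs_nonneg _).trans hxa
    have hxs : ∀ i ∈ s, |x i| ≤ t := fun i hi => hx i (mem_insert_of_mem hi)
    rw [card_insert_of_notMem ha, Nat.cast_succ] at hst ⊢
    have hst' : #s * t ≤ 1 := by linarith
    have hR := ih hxs hst'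
    have he₂ := abs_sq_sum_sub_sum_sq_le s x hxs
    have hfactor : |1 + x a| ≤ 1 + t := (abs_add_le _ _).trans (by simpa using hxa)
    rw [prod_insert ha, sum_insert ha, sum_insert ha]
    set R := ∏ i ∈ s, (1 + x i) - (1 + ∑ i ∈ s, x i + ((∑ i ∈ s, x i) ^ 2 - ∑ i ∈ s, x i ^ 2) / 2)
    have hstep : (1 + x a) * ∏ i ∈ s, (1 + x i) - (1 + (x a + ∑ i ∈ s, x i) +
        ((x a + ∑ i ∈ s, x i) ^ 2 - (x a ^ 2 + ∑ i ∈ s, x i ^ 2)) / 2) =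
        (1 + x a) * R + x a * (((∑ i ∈ s, x i) ^ 2 - ∑ i ∈ s, x i ^ 2) / 2) := by
      ring
    rw [hstep]
    calc _ ≤ |1 + x a| * |R| + |x a| * (|(∑ i ∈ s, x i) ^ 2 - ∑ i ∈ s, x i ^ 2| / 2) := by
          rw [← abs_two, ← abs_div, ← abs_mul, ← abs_mul, abs_two]; exact abs_add_le _ _
      _ ≤ (1 + t) * (#s * t) ^ 3 + t * ((#s * t) ^ 2 / 2) := by
          gcongr
      _ ≤ ((#s + 1) * t) ^ 3 := by
          have hu : 0 ≤ (#s : ℝ) * t := by positivity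
          have hu3 : (#s * t) ^ 3 ≤ (#s * t) ^ 2 := pow_le_pow_of_le_one hu hst' (by norm_num)
          nlinarith [mul_le_mul_of_nonneg_left hu3 ht, mul_nonneg ht (pow_nonneg hu 2),
            mul_nonneg hu (pow_nonneg ht 2), pow_nonneg ht 3]

end ElementarySymmetric

section Conjugation

variable {n R : Type*} [Fintype n] [DecidableEq n] [CommRing R] [StarRing R]

theorem Matrix.det_conjStarAlgAut (U : unitary (Matrix n n R)) (M : Matrix n n R) :
    (conjStarAlgAut R _ U M).det = M.det := by
  rw [conjStarAlgAut_apply, det_mul_comm, ← Matrix.mul_assoc, coe_star_mul_self, Matrix.one_mul]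

theorem Matrix.trace_conjStarAlgAut (U : unitary (Matrix n n R)) (M : Matrix n n R) :
    (conjStarAlgAut R _ U M).trace = M.trace := by
  rw [conjStarAlgAut_apply, trace_mul_cycle, coe_star_mul_self, Matrix.one_mul]

end Conjugation

namespace Matrix.IsHermitian

variable {n 𝕜 : Type*} [Fintype n] [DecidableEq n] [RCLike 𝕜] {A : Matrix n n 𝕜}

theorem det_one_add_smul (hA : A.IsHermitian) (ε : ℝ) :
    (1 + ε • A).det = ∏ i, ((1 + ε * hA.eigenvalues i : ℝ) : 𝕜) := by
  have h : 1 + ε • A = conjStarAlgAut 𝕜 _ hA.eigenvectorUnitary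
      (diagonal fun i => ((1 + ε * hA.eigenvalues i : ℝ) : 𝕜)) := by
    conv_lhs => rw [hA.spectral_theorem]
    rw [RCLike.real_smul_eq_coe_smul (K := 𝕜), ← map_smul, ← map_one (conjStarAlgAut 𝕜 _ _),
      ← map_add]
    congr 1
    ext i j
    rcases eq_or_ne i j with rfl | hij
    · simp
    · simp [hij]
  rw [h, det_conjStarAlgAut, det_diagonal]

theorem trace_mul_self (hA : A.IsHermitian) :
    (A * A).trace = ∑ i, ((hA.eigenvalues i ^ 2 : ℝ) : 𝕜) := by
  conv_lhs => rw [hA.spectral_theorem, ← map_mul, trace_conjStarAlgAut, diagonal_mul_diagonal,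
    trace_diagonal]
  simp [sq]

theorem abs_eigenvalues_le (hA : A.IsHermitian) (i : n) :
    |hA.eigenvalues i| ≤ ‖toEuclideanCLM (𝕜 := 𝕜) A‖ := by
  have : Nonempty n := ⟨i⟩
  have hmem : (hA.eigenvalues i : 𝕜) ∈ spectrum 𝕜 (toEuclideanCLM (𝕜 := 𝕜) A) := by
    rw [AlgEquiv.spectrum_eq, hA.spectrum_eq_image_range]
    exact Set.mem_image_of_mem _ (Set.mem_range_self i)
  simpa using spectrum.norm_le_norm_of_mem hmem

end Matrix.IsHermitian

theorem stmt0_general {d : ℕ} (A : Matrix (Fin d) (Fin d) ℝ) (hA : A.IsSymm)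
    (c : ℝ) (hAc : matOpNorm A ≤ c)
    (ε : ℝ) (hε0 : 0 < ε) (hε : ε ≤ 1 / (2 * c * d)) :
    |(1 + ε • A).det -
        (1 + ε * A.trace + ε ^ 2 / 2 * (A.trace ^ 2 - (A * A).trace))| ≤
      ε ^ 3 * c ^ 3 * (d : ℝ) ^ 3 := by
  have hH : A.IsHermitian := isHermitian_iff_isSymm.mpr hA
  have hc : 0 ≤ c := (norm_nonneg _).trans hAc
  have hx : ∀ i ∈ univ, |ε * hH.eigenvalues i| ≤ ε * c := fun i _ => by
    rw [abs_mul, abs_of_pos hε0]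
    exact mul_le_mul_of_nonneg_left ((hH.abs_eigenvalues_le i).trans hAc) hε0.le
  have hεcd : (#(univ : Finset (Fin d)) : ℝ) * (ε * c) ≤ 1 := by
    rw [card_univ, Fintype.card_fin]
    have h := mul_le_mul_of_nonneg_right hε (by positivity : (0 : ℝ) ≤ 2 * c * d)
    rw [one_div_mul_eq_div] at h
    linarith [div_self_le_one (2 * c * d)]
  have hkey := abs_prod_one_add_sub_le univ (fun i => ε * hH.eigenvalues i) hx hεcd
  rw [hH.det_one_add_smul, hH.trace_eq_sum_eigenvalues, hH.trace_mul_self]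
  simp only [card_univ, Fintype.card_fin, RCLike.ofReal_real_eq_id, id] at hkey ⊢
  convert hkey using 2
  · simp only [← mul_sum, mul_pow]
    ring
  · ring

theorem stmt0 {d : ℕ} (hd : 0 < d) (A : Matrix (Fin d) (Fin d) ℝ) (hA : A.IsSymm)
    (c : ℝ) (hc : 0 < c) (hAc : matOpNorm A ≤ c)
    (ε : ℝ) (hε0 : 0 < ε) (hε : ε ≤ 1 / (2 * c * d)) :
    |(1 + ε • A).det -
        (1 + ε * A.trace + ε ^ 2 / 2 * (A.trace ^ 2 - (A * A).trace))| ≤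
      ε ^ 3 * c ^ 3 * (d : ℝ) ^ 3 :=
  stmt0_general A hA c hAc ε hε0 hε
end

section
/- For every real number δ with 0 < δ ≤ 1/(2Ld) and every x ∈ ℝ^d, the matrix I − δ∇²U(x) is invertible and |det(I − δ∇²U(x))^{-1} − (1 + δ·tr(∇²U(x)))| ≤ 64·δ²·d²·L². -/
/-- The Hessian matrix of `U : ℝ^d → ℝ` at `x`. -/
noncomputable def hessMat {d : ℕ} (U : EuclideanSpace ℝ (Fin d) → ℝ)
    (x : EuclideanSpace ℝ (Fin d)) : Matrix (Fin d) (Fin d) ℝ :=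
  fun i j =>
    iteratedFDeriv ℝ 2 U x ![EuclideanSpace.single i 1, EuclideanSpace.single j 1]

/-!
Diagonalise the symmetric Hessian `H = ∇²U(x)`: with `aᵢ = δ λᵢ`, the determinant of `1 - δH` is
`∏ (1 - aᵢ)` and `δ tr H = ∑ aᵢ`. Every eigenvalue satisfies `|λᵢ| ≤ ‖H‖ ≤ L`, so
`∑ |aᵢ| ≤ δLd ≤ 1/2`. A scalar induction on the number of factors shows that then
`|(∏ (1 - aᵢ))⁻¹ - (1 + ∑ aᵢ)| ≤ 2 (∑ |aᵢ|)²`.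
-/

open Finset Matrix

lemma Finset.prod_one_sub_pos_of_sum_abs_lt_one {ι : Type*} {s : Finset ι} {a : ι → ℝ}
    (h : ∑ i ∈ s, |a i| < 1) : 0 < ∏ i ∈ s, (1 - a i) :=
  prod_pos fun i hi ↦ by
    have := (le_abs_self (a i)).trans <|
      single_le_sum (f := fun i ↦ |a i|) (fun _ _ ↦ abs_nonneg _) hi
    linarith

lemma abs_div_one_sub_sub_le {p s t b : ℝ} (hp : |p - (1 + s)| ≤ 2 * t ^ 2) (hs : |s| ≤ t)
    (hb : |b| + t ≤ 1 / 2) : |p / (1 - b) - (1 + (b + s))| ≤ 2 * (|b| + t) ^ 2 := by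
  have ht : 0 ≤ t := (abs_nonneg s).trans hs
  have hb1 : 1 / 2 ≤ 1 - b := by linarith [le_abs_self b]
  have hsplit : p / (1 - b) - (1 + (b + s)) = (p - (1 + s) + b * (s + b)) / (1 - b) := by
    field_simp
    ring
  have hnum : |p - (1 + s) + b * (s + b)| ≤ 2 * t ^ 2 + |b| * (t + |b|) :=
    calc |p - (1 + s) + b * (s + b)| ≤ |p - (1 + s)| + |b| * |s + b| := by
          rw [← abs_mul]; exact abs_add_le _ _
      _ ≤ 2 * t ^ 2 + |b| * (t + |b|) := by gcongr; exact (abs_add_le _ _).trans (by linarith)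
  rw [hsplit, abs_div, abs_of_pos (a := 1 - b) (by linarith), div_le_iff₀ (by linarith)]
  set c := |b|
  have hc : 0 ≤ c := abs_nonneg b
  have hbc : 2 * (c + t) ^ 2 * (1 - c) ≤ 2 * (c + t) ^ 2 * (1 - b) := by
    gcongr; exact le_abs_self b
  have hsq : c * (2 * (c + t) ^ 2) ≤ c * (c + t) := by
    gcongr; nlinarith
  -- `2(c + t)²(1 - c) - (2t² + c(t + c)) = c(3t + c - 2(c + t)²) ≥ 2ct`
  nlinarith [mul_nonneg hc ht]

lemma abs_inv_prod_one_sub_sub_le {ι : Type*} (s : Finset ι) (a : ι → ℝ)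
    (h : ∑ i ∈ s, |a i| ≤ 1 / 2) :
    |(∏ i ∈ s, (1 - a i))⁻¹ - (1 + ∑ i ∈ s, a i)| ≤ 2 * (∑ i ∈ s, |a i|) ^ 2 := by
  induction s using Finset.cons_induction with
  | empty => simp
  | cons j s hj ih =>
    rw [sum_cons] at h ⊢
    have hs : ∑ i ∈ s, |a i| ≤ 1 / 2 := by linarith [abs_nonneg (a j)]
    rw [prod_cons, sum_cons, mul_inv, ← div_eq_inv_mul]
    exact abs_div_one_sub_sub_le (ih hs) (abs_sum_le_sum_abs _ _) h

theorem Matrix.IsHermitian.abs_eigenvalues_le_norm_toEuclideanCLM {𝕜 n : Type*} [RCLike 𝕜]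
    [Fintype n] [DecidableEq n] {A : Matrix n n 𝕜} (hA : A.IsHermitian) (i : n) :
    |hA.eigenvalues i| ≤ ‖toEuclideanCLM (𝕜 := 𝕜) A‖ := by
  have happ : toEuclideanCLM (𝕜 := 𝕜) A (hA.eigenvectorBasis i)
      = hA.eigenvalues i • hA.eigenvectorBasis i := by
    ext j
    simpa using congrFun (hA.mulVec_eigenvectorBasis i) j
  simpa [happ, norm_smul, hA.eigenvectorBasis.orthonormal.1 i] using
    (toEuclideanCLM (𝕜 := 𝕜) A).le_opNorm (hA.eigenvectorBasis i)

theorem Matrix.IsHermitian.det_one_sub_smul {𝕜 n : Type*} [RCLike 𝕜] [Fintype n] [DecidableEq n]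
    {A : Matrix n n 𝕜} (hA : A.IsHermitian) (t : 𝕜) :
    (1 - t • A).det = ∏ i, (1 - t * hA.eigenvalues i) := by
  set u : Matrix n n 𝕜 := (hA.eigenvectorUnitary : Matrix n n 𝕜)
  have hdiag : diagonal (fun i ↦ 1 - t * hA.eigenvalues i) =
      1 - t • diagonal (RCLike.ofReal ∘ hA.eigenvalues) := by
    ext i j
    by_cases h : i = j <;> simp [h]
  have hconj : 1 - t • A = u * diagonal (fun i ↦ 1 - t * hA.eigenvalues i) * star u := by
    conv_lhs => rw [hA.spectral_theorem]
    simp [hdiag, Matrix.mul_sub, Matrix.sub_mul, u]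
  rw [hconj, det_mul, det_mul, mul_comm, ← mul_assoc, ← det_mul, Unitary.coe_star_mul_self,
    det_one, one_mul, det_diagonal]

lemma hessMat_isHermitian {d : ℕ} {U : EuclideanSpace ℝ (Fin d) → ℝ}
    {x : EuclideanSpace ℝ (Fin d)} (hU : ContDiffAt ℝ 2 U x) : (hessMat U x).IsHermitian := by
  have hsymm : IsSymmSndFDerivAt ℝ U x := hU.isSymmSndFDerivAt (by simp)
  refine IsHermitian.ext fun i j ↦ ?_
  simpa [hessMat, iteratedFDeriv_two_apply] using
    hsymm (EuclideanSpace.single j 1) (EuclideanSpace.single i 1)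

theorem stmt1_general {d : ℕ} (U : EuclideanSpace ℝ (Fin d) → ℝ)
    (L : ℝ) (hU : ContDiff ℝ 2 U)
    (hHess : ∀ x, matOpNorm (hessMat U x) ≤ L)
    (δ : ℝ) (hδ0 : 0 < δ) (hδ : δ ≤ 1 / (2 * L * d)) (x : EuclideanSpace ℝ (Fin d)) :
    IsUnit (1 - δ • hessMat U x) ∧
      |((1 - δ • hessMat U x).det)⁻¹ - (1 + δ * (hessMat U x).trace)| ≤
        64 * δ ^ 2 * (d : ℝ) ^ 2 * L ^ 2 := by
  set H := hessMat U x
  have hH : H.IsHermitian := hessMat_isHermitian hU.contDiffAt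
  set a : Fin d → ℝ := fun i ↦ δ * hH.eigenvalues i
  have hdet : (1 - δ • H).det = ∏ i, (1 - a i) := by simpa using hH.det_one_sub_smul δ
  have htr : δ * H.trace = ∑ i, a i := by simp [a, hH.trace_eq_sum_eigenvalues, mul_sum]
  have hL : 0 ≤ L := (norm_nonneg _).trans (hHess x)
  have hsum : ∑ i, |a i| ≤ δ * L * d :=
    calc ∑ i, |a i| ≤ ∑ _i : Fin d, δ * L := sum_le_sum fun i _ ↦ by
          rw [abs_mul, abs_of_pos hδ0]
          gcongr
          exact (hH.abs_eigenvalues_le_norm_toEuclideanCLM i).trans (hHess x)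
      _ = δ * L * d := by simp [mul_comm]
  have hsmall : δ * L * d ≤ 1 / 2 := by
    have := mul_le_of_le_div₀ zero_le_one (by positivity) hδ
    linarith
  refine ⟨?_, ?_⟩
  · rw [isUnit_iff_isUnit_det, hdet]
    exact (prod_one_sub_pos_of_sum_abs_lt_one (by linarith)).ne'.isUnit
  · rw [hdet, htr]
    calc _ ≤ 2 * (∑ i, |a i|) ^ 2 := abs_inv_prod_one_sub_sub_le _ _ (hsum.trans hsmall)
      _ ≤ 2 * (δ * L * d) ^ 2 := by gcongr
      _ ≤ 64 * δ ^ 2 * (d : ℝ) ^ 2 * L ^ 2 := by nlinarith [sq_nonneg (δ * L * d)]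

theorem stmt1 {d : ℕ} (hd : 0 < d) (U : EuclideanSpace ℝ (Fin d) → ℝ)
    (L : ℝ) (hL : 0 < L) (hU : ContDiff ℝ 2 U)
    (hHess : ∀ x, matOpNorm (hessMat U x) ≤ L)
    (δ : ℝ) (hδ0 : 0 < δ) (hδ : δ ≤ 1 / (2 * L * d)) (x : EuclideanSpace ℝ (Fin d)) :
    IsUnit (1 - δ • hessMat U x) ∧
      |((1 - δ • hessMat U x).det)⁻¹ - (1 + δ * (hessMat U x).trace)| ≤
        64 * δ ^ 2 * (d : ℝ) ^ 2 * L ^ 2 :=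
  stmt1_general U L hU hHess δ hδ0 hδ x
end

section
/- Let 0 < δ ≤ 1/(16L) and let x, y ∈ ℝ^d satisfy x = y − δ∇U(y) + √(2δ)·T. Then: (1) ‖y − x‖₂ ≤ 4·δ^{1/2}·L^{1/2}·(‖x‖₂ + 1); (2) ‖y − x + √(2δ)·T − δ∇U(x)‖₂ ≤ 4·δ^{3/2}·L^{3/2}·(‖x‖₂ + 1); (3) ‖y − x + √(2δ)·T‖₂ ≤ 2·δ·L·(‖x‖₂ + 1). -/
set_option maxHeartbeats 1000000 in
theorem stmt2 {d : ℕ} (hd : 0 < d) (U : EuclideanSpace ℝ (Fin d) → ℝ)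
    (L : ℝ) (hL : 0 < L) (hU : ContDiff ℝ 1 U)
    (hgrad0 : gradient U 0 = 0)
    (hLip : ∀ z w, ‖gradient U z - gradient U w‖ ≤ L * ‖z - w‖)
    (T : EuclideanSpace ℝ (Fin d)) (hT : ‖T‖ ≤ Real.sqrt L)
    (δ : ℝ) (hδ0 : 0 < δ) (hδ : δ ≤ 1 / (16 * L))
    (x y : EuclideanSpace ℝ (Fin d))
    (hxy : x = y - δ • gradient U y + Real.sqrt (2 * δ) • T) :
    ‖y - x‖ ≤ 4 * Real.sqrt δ * Real.sqrt L * (‖x‖ + 1) ∧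
    ‖y - x + Real.sqrt (2 * δ) • T - δ • gradient U x‖ ≤
      4 * (δ * Real.sqrt δ) * (L * Real.sqrt L) * (‖x‖ + 1) ∧
    ‖y - x + Real.sqrt (2 * δ) • T‖ ≤ 2 * δ * L * (‖x‖ + 1) := by
  have hδL : δ * L ≤ 1 / 16 := by
    rw [le_div_iff₀ (by positivity)] at hδ
    nlinarith
  set sδ := Real.sqrt δ with hsδ
  set sL := Real.sqrt L with hsL
  have hsδ0 : 0 ≤ sδ := Real.sqrt_nonneg _
  have hsL0 : 0 ≤ sL := Real.sqrt_nonneg _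
  have hsδ2 : sδ ^ 2 = δ := Real.sq_sqrt hδ0.le
  have hsL2 : sL ^ 2 = L := Real.sq_sqrt hL.le
  have hquarter : sδ * sL ≤ 1 / 4 := by nlinarith
  set s := Real.sqrt (2 * δ) with hs
  have hs2 : s = Real.sqrt 2 * sδ := Real.sqrt_mul (by norm_num) δ
  have hsqrt2 : Real.sqrt 2 ≤ 2 := by
    nlinarith [Real.sq_sqrt (by norm_num : (0:ℝ) ≤ 2), Real.sqrt_nonneg 2]
  have hs0 : 0 ≤ s := Real.sqrt_nonneg _
  have hT0 : 0 ≤ ‖T‖ := norm_nonneg _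
  have hgy : ‖gradient U y‖ ≤ L * ‖y‖ := by
    simpa [hgrad0] using hLip y 0
  have hyx : y - x = δ • gradient U y - s • T := by
    rw [hxy]; abel
  have hA : ‖y - x‖ ≤ δ * (L * ‖y‖) + s * sL := by
    rw [hyx]
    calc ‖δ • gradient U y - s • T‖ ≤ ‖δ • gradient U y‖ + ‖s • T‖ := norm_sub_le _ _
      _ = δ * ‖gradient U y‖ + s * ‖T‖ := by
          rw [norm_smul, norm_smul, Real.norm_of_nonneg hδ0.le, Real.norm_of_nonneg hs0]
      _ ≤ δ * (L * ‖y‖) + s * sL := by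
          gcongr
  have hyb : ‖y‖ ≤ ‖x‖ + ‖y - x‖ := by
    calc ‖y‖ = ‖x + (y - x)‖ := by rw [add_sub_cancel]
      _ ≤ ‖x‖ + ‖y - x‖ := norm_add_le _ _
  have hy0 : 0 ≤ ‖y‖ := norm_nonneg _
  have hx0 : 0 ≤ ‖x‖ := norm_nonneg _
  have hssδL : 0 ≤ sδ * sL := mul_nonneg hsδ0 hsL0
  have hssL : s * sL ≤ 2 * (sδ * sL) := by
    rw [hs2]
    nlinarith [Real.sqrt_nonneg 2]
  have hδLy : δ * (L * ‖y‖) ≤ (1 / 16) * ‖y‖ := by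
    nlinarith [mul_le_mul_of_nonneg_right hδL hy0]
  have hy2 : ‖y‖ ≤ 2 * (‖x‖ + 1) := by linarith
  have hδL4 : δ * L ≤ (1 / 4) * (sδ * sL) := by nlinarith
  have hx1 : (0:ℝ) ≤ ‖x‖ + 1 := by linarith
  have h1 : δ * (L * ‖y‖) ≤ (1 / 4 * (sδ * sL)) * (2 * (‖x‖ + 1)) := by
    calc δ * (L * ‖y‖) = (δ * L) * ‖y‖ := by ring
      _ ≤ (1 / 4 * (sδ * sL)) * (2 * (‖x‖ + 1)) := mul_le_mul hδL4 hy2 hy0 (by positivity)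
  have h2 : s * sL ≤ 2 * (sδ * sL) * (‖x‖ + 1) := by
    nlinarith
  have hpart1 : ‖y - x‖ ≤ 4 * sδ * sL * (‖x‖ + 1) := by
    nlinarith [mul_nonneg hssδL hx1]
  refine ⟨hpart1, ?_, ?_⟩
  · have heq : y - x + s • T - δ • gradient U x
        = δ • (gradient U y - gradient U x) := by
      rw [hyx, smul_sub]; abel
    rw [heq, norm_smul, Real.norm_of_nonneg hδ0.le]
    have := hLip y x
    calc δ * ‖gradient U y - gradient U x‖ ≤ δ * (L * ‖y - x‖) := by gcongr
      _ ≤ δ * (L * (4 * sδ * sL * (‖x‖ + 1))) := by gcongr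
      _ = 4 * (δ * sδ) * (L * sL) * (‖x‖ + 1) := by ring
  · have heq : y - x + s • T = δ • gradient U y := by rw [hyx]; abel
    rw [heq, norm_smul, Real.norm_of_nonneg hδ0.le]
    calc δ * ‖gradient U y‖ ≤ δ * (L * ‖y‖) := by gcongr
      _ ≤ δ * (L * (2 * (‖x‖ + 1))) := by gcongr
      _ = 2 * δ * L * (‖x‖ + 1) := by ring
end

section
/- Let 0 < δ ≤ 1/(16L) and let x, y ∈ ℝ^d satisfy x = y − δ∇U(y) + √(2δ)·T. Then |tr(∇²U(y)) − tr(∇²U(x))| ≤ 4·δ^{1/2}·d·L^{3/2}·(‖x‖₂ + 1). -/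
set_option maxHeartbeats 1000000


theorem stmt3 {d : ℕ} (hd : 0 < d) (U : EuclideanSpace ℝ (Fin d) → ℝ)
    (L : ℝ) (hL : 0 < L) (hU : ContDiff ℝ 3 U)
    (hgrad0 : gradient U 0 = 0)
    (hHess : ∀ z, ‖iteratedFDeriv ℝ 2 U z‖ ≤ L)
    (hD3 : ∀ z, ‖iteratedFDeriv ℝ 3 U z‖ ≤ L)
    (T : EuclideanSpace ℝ (Fin d)) (hT : ‖T‖ ≤ Real.sqrt L)
    (δ : ℝ) (hδ0 : 0 < δ) (hδ : δ ≤ 1 / (16 * L))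
    (x y : EuclideanSpace ℝ (Fin d))
    (hxy : x = y - δ • gradient U y + Real.sqrt (2 * δ) • T) :
    |(hessMat U y).trace - (hessMat U x).trace| ≤
      4 * Real.sqrt δ * (d : ℝ) * (L * Real.sqrt L) * (‖x‖ + 1) := by
  -- Lipschitz bound for iterated derivatives
  have hlip : ∀ (n : ℕ), n < 3 → (∀ z, ‖iteratedFDeriv ℝ (n+1) U z‖ ≤ L) →
      ∀ a b : EuclideanSpace ℝ (Fin d),
        ‖iteratedFDeriv ℝ n U a - iteratedFDeriv ℝ n U b‖ ≤ L * ‖a - b‖ := by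
    intro n hn hbnd a b
    have hdiff : Differentiable ℝ (iteratedFDeriv ℝ n U) :=
      hU.differentiable_iteratedFDeriv (by exact_mod_cast hn)
    exact Convex.norm_image_sub_le_of_norm_fderiv_le
      (fun z _ => (hdiff z)) (fun z _ => by
        rw [norm_fderiv_iteratedFDeriv]; exact hbnd z) convex_univ trivial trivial
  -- gradient Lipschitz bound
  have hgrady : ‖gradient U y‖ ≤ L * ‖y‖ := by
    have e1 : ∀ z : EuclideanSpace ℝ (Fin d),
        (continuousMultilinearCurryFin1 ℝ (EuclideanSpace ℝ (Fin d)) ℝ)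
          (iteratedFDeriv ℝ 1 U z) = fderiv ℝ U z := by
      intro z; ext v; simp [Fin.snoc]
    have e2 : ∀ z : EuclideanSpace ℝ (Fin d), ‖gradient U z - gradient U 0‖
        = ‖iteratedFDeriv ℝ 1 U z - iteratedFDeriv ℝ 1 U 0‖ := by
      intro z
      have h3 : gradient U z - gradient U 0
          = (InnerProductSpace.toDual ℝ (EuclideanSpace ℝ (Fin d))).symm
              (fderiv ℝ U z - fderiv ℝ U 0) := by
        simp [gradient]
      rw [h3, LinearIsometryEquiv.norm_map, ← e1 z, ← e1 0,
        ← LinearIsometryEquiv.map_sub, LinearIsometryEquiv.norm_map]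
    calc ‖gradient U y‖ = ‖gradient U y - gradient U 0‖ := by rw [hgrad0, sub_zero]
      _ = ‖iteratedFDeriv ℝ 1 U y - iteratedFDeriv ℝ 1 U 0‖ := e2 y
      _ ≤ L * ‖y - 0‖ := hlip 1 (by norm_num) (by simpa using hHess) y 0
      _ = L * ‖y‖ := by rw [sub_zero]
  -- bound on ‖x - y‖
  have hδL : δ * L ≤ 1 / 16 := by
    rw [le_div_iff₀ (by positivity)] at hδ
    nlinarith
  set s : ℝ := Real.sqrt (δ * L) with hs_def
  have hs0 : 0 ≤ s := Real.sqrt_nonneg _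
  have hs2 : s ^ 2 = δ * L := Real.sq_sqrt (by positivity)
  have hs : s ≤ 1 / 4 := by
    rw [hs_def, show (1:ℝ)/4 = Real.sqrt (1/16) by
      rw [show (1:ℝ)/16 = (1/4)^2 by norm_num, Real.sqrt_sq (by norm_num)]]
    exact Real.sqrt_le_sqrt hδL
  have hsqrt2 : Real.sqrt 2 ≤ 1.5 := by
    rw [show (1.5:ℝ) = Real.sqrt (1.5^2) by rw [Real.sqrt_sq]; norm_num]
    exact Real.sqrt_le_sqrt (by norm_num)
  have hxy' : ‖x - y‖ ≤ δ * L * ‖y‖ + Real.sqrt 2 * s := by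
    have hsplit : x - y = -(δ • gradient U y) + Real.sqrt (2 * δ) • T := by
      rw [hxy]; abel
    rw [hsplit]
    have h2δ : Real.sqrt (2 * δ) * ‖T‖ ≤ Real.sqrt 2 * s := by
      calc Real.sqrt (2 * δ) * ‖T‖ ≤ Real.sqrt (2 * δ) * Real.sqrt L :=
            mul_le_mul_of_nonneg_left hT (Real.sqrt_nonneg _)
        _ = Real.sqrt 2 * s := by
          rw [hs_def, Real.sqrt_mul (by norm_num : (0:ℝ) ≤ 2),
            Real.sqrt_mul hδ0.le, mul_assoc]
    calc ‖-(δ • gradient U y) + Real.sqrt (2 * δ) • T‖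
        ≤ ‖-(δ • gradient U y)‖ + ‖Real.sqrt (2 * δ) • T‖ := norm_add_le _ _
      _ = δ * ‖gradient U y‖ + Real.sqrt (2 * δ) * ‖T‖ := by
          rw [norm_neg, norm_smul, norm_smul, Real.norm_eq_abs, Real.norm_eq_abs,
            abs_of_pos hδ0, abs_of_nonneg (Real.sqrt_nonneg _)]
      _ ≤ δ * (L * ‖y‖) + Real.sqrt 2 * s := by gcongr
      _ = δ * L * ‖y‖ + Real.sqrt 2 * s := by ring
  -- bound on ‖y‖
  have hy : ‖y‖ ≤ (16/15) * (‖x‖ + Real.sqrt 2 * s) := by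
    have h1 : ‖y‖ ≤ ‖x‖ + ‖x - y‖ := by
      calc ‖y‖ = ‖x - (x - y)‖ := by congr 1; abel
        _ ≤ ‖x‖ + ‖x - y‖ := norm_sub_le _ _
    nlinarith [norm_nonneg y, norm_nonneg x]
  -- consolidated bound
  have hkey : ‖y - x‖ ≤ 4 * s * (‖x‖ + 1) := by
    have h1 : ‖y - x‖ = ‖x - y‖ := norm_sub_rev _ _
    have hss : s ^ 2 ≤ (1/4) * s := by nlinarith
    have h38 : Real.sqrt 2 * s ≤ 3/8 := by nlinarith [Real.sqrt_nonneg 2]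
    have hsx : s ^ 2 * ‖x‖ ≤ (1/4) * (s * ‖x‖) := by
      nlinarith [norm_nonneg x, mul_le_mul_of_nonneg_right hss (norm_nonneg x)]
    have hcube : s ^ 2 * (Real.sqrt 2 * s) ≤ (3/32) * s := by
      nlinarith [mul_le_mul hss h38 (mul_nonneg (Real.sqrt_nonneg 2) hs0)
        (by positivity : (0:ℝ) ≤ (1/4) * s)]
    have hy2 : s ^ 2 * ‖y‖ ≤ s ^ 2 * ((16/15) * (‖x‖ + Real.sqrt 2 * s)) :=
      mul_le_mul_of_nonneg_left hy (sq_nonneg s)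
    have hfin : ‖x - y‖ ≤ s ^ 2 * ‖y‖ + Real.sqrt 2 * s := by rw [← hs2] at hxy'; exact hxy'
    have hs15 : Real.sqrt 2 * s ≤ 1.5 * s := by
      nlinarith [mul_nonneg (show (0:ℝ) ≤ 1.5 - Real.sqrt 2 by linarith) hs0]
    rw [h1]
    nlinarith [mul_nonneg hs0 (norm_nonneg x)]
  -- trace bound
  have htr : |(hessMat U y).trace - (hessMat U x).trace| ≤ (d : ℝ) * (L * ‖y - x‖) := by
    have hBound : ∀ i : Fin d, |hessMat U y i i - hessMat U x i i| ≤ L * ‖y - x‖ := by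
      intro i
      have h1 : hessMat U y i i - hessMat U x i i
          = (iteratedFDeriv ℝ 2 U y - iteratedFDeriv ℝ 2 U x)
            ![EuclideanSpace.single i 1, EuclideanSpace.single i 1] := by
        simp [hessMat]
      rw [h1]
      have h2 := (iteratedFDeriv ℝ 2 U y - iteratedFDeriv ℝ 2 U x).le_opNorm
        ![EuclideanSpace.single i (1:ℝ), EuclideanSpace.single i 1]
      have h3 : ∏ j : Fin 2, ‖(![EuclideanSpace.single i (1:ℝ), EuclideanSpace.single i 1]
          : Fin 2 → EuclideanSpace ℝ (Fin d)) j‖ = 1 := by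
        rw [Fin.prod_univ_two]
        simp [EuclideanSpace.norm_single]
      rw [h3, mul_one] at h2
      calc |(iteratedFDeriv ℝ 2 U y - iteratedFDeriv ℝ 2 U x)
            ![EuclideanSpace.single i 1, EuclideanSpace.single i 1]|
          ≤ ‖iteratedFDeriv ℝ 2 U y - iteratedFDeriv ℝ 2 U x‖ := h2
        _ ≤ L * ‖y - x‖ := hlip 2 (by norm_num) (by simpa using hD3) y x
    have h2 : (hessMat U y).trace - (hessMat U x).trace
        = ∑ i : Fin d, (hessMat U y i i - hessMat U x i i) := by
      rw [Finset.sum_sub_distrib]; rfl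
    rw [h2]
    calc |∑ i : Fin d, (hessMat U y i i - hessMat U x i i)|
        ≤ ∑ i : Fin d, |hessMat U y i i - hessMat U x i i| := Finset.abs_sum_le_sum_abs _ _
      _ ≤ ∑ _i : Fin d, L * ‖y - x‖ := Finset.sum_le_sum fun i _ => hBound i
      _ = (d : ℝ) * (L * ‖y - x‖) := by rw [Finset.sum_const, Finset.card_univ,
          Fintype.card_fin, nsmul_eq_mul]
  -- conclude
  have hsδL : s = Real.sqrt δ * Real.sqrt L := by rw [hs_def, Real.sqrt_mul hδ0.le]
  calc |(hessMat U y).trace - (hessMat U x).trace|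
      ≤ (d : ℝ) * (L * ‖y - x‖) := htr
    _ ≤ (d : ℝ) * (L * (4 * s * (‖x‖ + 1))) := by gcongr
    _ = 4 * Real.sqrt δ * (d : ℝ) * (L * Real.sqrt L) * (‖x‖ + 1) := by
        rw [hsδL]; ring
end

section
/- Let μ and ν be probability measures on a measurable space with ν absolutely continuous with respect to μ, and let f = dν/dμ denote the Radon–Nikodym derivative. Then the Kullback–Leibler divergence of ν from μ satisfies KL(ν‖μ) = ∫ f·log(f) dμ ≤ ∫ (f − 1)² dμ, i.e., the KL divergence is bounded above by the chi-squared divergence. -/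
/-!
With `f = dν/dμ`, the integrand of `KL(ν‖μ)` can be replaced by `klFun f = f log f + 1 - f`,
since `∫ (1 - f) dμ = 0`. From `log x ≤ x - 1` we get `x log x ≤ x (x - 1)`, i.e.
`klFun x ≤ (x - 1)²` for `x ≥ 0`, and the inequality follows by monotonicity of the
lower integral.
-/

open MeasureTheory

open scoped ENNReal

namespace InformationTheory

lemma klFun_le_sq_sub_one {x : ℝ} (hx : 0 ≤ x) : klFun x ≤ (x - 1) ^ 2 := by
  have h_mul_log : x * Real.log x ≤ x * (x - 1) := by
    rcases hx.eq_or_lt with rfl | hx_pos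
    · simp
    · exact mul_le_mul_of_nonneg_left (Real.log_le_sub_one_of_pos hx_pos) hx
  rw [klFun_apply]
  nlinarith

variable {α : Type*} [MeasurableSpace α] {μ ν : Measure α} [IsFiniteMeasure μ] [IsFiniteMeasure ν]

open Classical in
lemma klDiv_eq_ite_integral_rnDeriv_mul_log (hνμ : ν ≪ μ) (h_univ : ν Set.univ = μ Set.univ) :
    klDiv ν μ =
      if Integrable (fun x => (ν.rnDeriv μ x).toReal * Real.log ((ν.rnDeriv μ x).toReal)) μ
      then ENNReal.ofReal
          (∫ x, (ν.rnDeriv μ x).toReal * Real.log ((ν.rnDeriv μ x).toReal) ∂μ)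
      else ∞ := by
  rw [integrable_rnDeriv_mul_log_iff hνμ, integral_rnDeriv_mul_log hνμ]
  split_ifs with h_int
  · simp [klDiv_of_ac_of_integrable hνμ h_int, measureReal_def, h_univ]
  · exact klDiv_of_not_integrable h_int

lemma klDiv_le_lintegral_sq_rnDeriv_sub_one (hνμ : ν ≪ μ) :
    klDiv ν μ ≤ ∫⁻ x, ENNReal.ofReal (((ν.rnDeriv μ x).toReal - 1) ^ 2) ∂μ := by
  rw [klDiv_eq_lintegral_klFun_of_ac hνμ]
  exact lintegral_mono fun x =>
    ENNReal.ofReal_le_ofReal (klFun_le_sq_sub_one ENNReal.toReal_nonneg)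

end InformationTheory

open InformationTheory

open Classical in
/-- The Kullback–Leibler divergence `KL(ν‖μ) = ∫ f log f dμ` (with value `∞` when
`f log f` is not integrable, where `f = dν/dμ`) is bounded above by the
chi-squared divergence `χ²(ν, μ) = ∫ (f - 1)² dμ`, in `[0, ∞]`. -/
theorem stmt10 {α : Type*} [MeasurableSpace α] (μ ν : Measure α)
    [IsProbabilityMeasure μ] [IsProbabilityMeasure ν] (hνμ : ν ≪ μ) :
    (if Integrable
          (fun x => (ν.rnDeriv μ x).toReal * Real.log ((ν.rnDeriv μ x).toReal)) μ
      then ENNReal.ofReal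
          (∫ x, (ν.rnDeriv μ x).toReal * Real.log ((ν.rnDeriv μ x).toReal) ∂μ)
      else ∞) ≤
      ∫⁻ x, ENNReal.ofReal (((ν.rnDeriv μ x).toReal - 1) ^ 2) ∂μ := by
  rw [← klDiv_eq_ite_integral_rnDeriv_mul_log hνμ (by simp)]
  exact klDiv_le_lintegral_sq_rnDeriv_sub_one hνμ
end

section
/- Let 0 < δ ≤ 1/(2^8 · d² · L) and let x, y ∈ ℝ^d satisfy x = y − δ∇U(y) + √(2δ)·T(y). Then the matrix I − δ∇²U(y) + √(2δ)·DT(y) is invertible and |det(I − δ∇²U(y) + √(2δ)·DT(y))^{-1} − 1| ≤ 2·δ^{1/2}·d·L^{1/2}·(‖x‖₂² + 1). -/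
/-- The Jacobian matrix of `T : ℝ^d → ℝ^d` at `x`. -/
noncomputable def jacMat {d : ℕ}
    (T : EuclideanSpace ℝ (Fin d) → EuclideanSpace ℝ (Fin d))
    (x : EuclideanSpace ℝ (Fin d)) : Matrix (Fin d) (Fin d) ℝ :=
  fun i j => fderiv ℝ T x (EuclideanSpace.single j 1) i

/-- The matrix with entries `M(x)_{i,j} = Σ_k (∂²T_i/∂x_j∂x_k)(x) · T_k(x)`. -/
noncomputable def secondDerivContraction {d : ℕ}
    (T : EuclideanSpace ℝ (Fin d) → EuclideanSpace ℝ (Fin d))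
    (x : EuclideanSpace ℝ (Fin d)) : Matrix (Fin d) (Fin d) ℝ :=
  fun i j => ∑ k, iteratedFDeriv ℝ 2 (fun z => T z i) x
      ![EuclideanSpace.single j 1, EuclideanSpace.single k 1] * T x k

/-!
`M = I - δ ∇²U(y) + √(2δ) DT(y)` is symmetric, and for a unit vector `v` the quadratic form
`vᵀ (M - I) v = -δ ∇²U(y)(v, v) + √(2δ) ⟨v, DT(y) v⟩` has absolute value at most
`a = δL + √(2δ)√L`. Hence every eigenvalue of `M` lies in `[1 - a, 1 + a]` and
`(1 - a)^d ≤ det M ≤ (1 + a)^d ≤ (1 - a)^(-d)`, so Bernoulli's inequality puts `det M` between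
`1 - da` and `(1 - da)⁻¹`. The step-size condition gives `d√(δL) ≤ 1/16`, hence
`a ≤ (3/2)√(δL)` and `da ≤ 3/32`, and then `|(det M)⁻¹ - 1| ≤ (4/3)da ≤ 2d√(δL)`.
-/

open Matrix

lemma one_sub_mul_le_pow {a : ℝ} (ha : a ≤ 2) (n : ℕ) : 1 - n * a ≤ (1 - a) ^ n := by
  simpa [sub_eq_add_neg] using one_add_mul_le_pow (a := -a) (by linarith) n

lemma one_add_pow_le_inv_one_sub_mul {a : ℝ} {n : ℕ} (ha0 : 0 ≤ a) (ha1 : a < 1)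
    (ha : n * a < 1) : (1 + a) ^ n ≤ (1 - n * a)⁻¹ := by
  have hprod : (1 + a) ^ n * (1 - a) ^ n ≤ 1 := by
    rw [← mul_pow]
    exact pow_le_one₀ (by nlinarith) (by nlinarith)
  calc (1 + a) ^ n ≤ ((1 - a) ^ n)⁻¹ := by
        rwa [← one_div, le_div_iff₀ (pow_pos (by linarith) n)]
    _ ≤ (1 - n * a)⁻¹ := inv_anti₀ (by linarith) (one_sub_mul_le_pow (by linarith) n)

lemma abs_inv_sub_one_le_of_one_sub_le {ε D : ℝ} (hε0 : 0 ≤ ε) (hε : ε ≤ 1 / 4)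
    (hlow : 1 - ε ≤ D) (hup : D ≤ (1 - ε)⁻¹) : |D⁻¹ - 1| ≤ 4 / 3 * ε := by
  have hpos : 0 < 1 - ε := by linarith
  have hinv_le : (1 - ε)⁻¹ ≤ 1 + 4 / 3 * ε := by
    rw [inv_le_iff_one_le_mul₀ hpos]
    nlinarith
  have h1 : D⁻¹ ≤ (1 - ε)⁻¹ := inv_anti₀ hpos hlow
  have h2 : 1 - ε ≤ D⁻¹ := (le_inv_comm₀ hpos (hpos.trans_le hlow)).2 hup
  rw [abs_le]
  constructor <;> linarith

lemma abs_inv_sub_one_le_of_pow_bounds {n : ℕ} {a D : ℝ} (ha0 : 0 ≤ a) (ha1 : a < 1)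
    (ha : n * a ≤ 1 / 4) (hlow : (1 - a) ^ n ≤ D) (hup : D ≤ (1 + a) ^ n) :
    0 < D ∧ |D⁻¹ - 1| ≤ 4 / 3 * (n * a) := by
  have hlow' : 1 - n * a ≤ D := (one_sub_mul_le_pow (by linarith) n).trans hlow
  have hup' : D ≤ (1 - n * a)⁻¹ :=
    hup.trans (one_add_pow_le_inv_one_sub_mul ha0 ha1 (by linarith))
  exact ⟨by linarith, abs_inv_sub_one_le_of_one_sub_le (by positivity) ha hlow' hup'⟩

namespace Matrix.IsHermitian

variable {n : Type*} [Fintype n] [DecidableEq n] {A : Matrix n n ℝ}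

lemma abs_eigenvalues_sub_one_le (hA : A.IsHermitian) {a : ℝ}
    (h : ∀ v : EuclideanSpace ℝ n, |⇑v ⬝ᵥ (A - 1) *ᵥ ⇑v| ≤ a * ‖v‖ ^ 2) (i : n) :
    |hA.eigenvalues i - 1| ≤ a := by
  set u := hA.eigenvectorBasis i
  have hu : ‖u‖ = 1 := hA.eigenvectorBasis.orthonormal.1 i
  have huu : ⇑u ⬝ᵥ ⇑u = 1 := by
    have := real_inner_self_eq_norm_sq u
    rw [hu, EuclideanSpace.inner_eq_star_dotProduct] at this
    simpa using this
  have heig : hA.eigenvalues i = ⇑u ⬝ᵥ A *ᵥ ⇑u := by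
    simpa using hA.eigenvalues_eq i
  simpa [sub_mulVec, dotProduct_sub, huu, ← heig, hu] using h u

lemma pow_le_det_and_det_le_pow (hA : A.IsHermitian) {a : ℝ} (ha : a ≤ 1)
    (h : ∀ i, |hA.eigenvalues i - 1| ≤ a) :
    (1 - a) ^ Fintype.card n ≤ A.det ∧ A.det ≤ (1 + a) ^ Fintype.card n := by
  have hlow : ∀ i, 1 - a ≤ hA.eigenvalues i := fun i => by linarith [(abs_le.mp (h i)).1]
  have hup : ∀ i, hA.eigenvalues i ≤ 1 + a := fun i => by linarith [(abs_le.mp (h i)).2]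
  rw [hA.det_eq_prod_eigenvalues, ← Finset.card_univ, ← Finset.prod_const, ← Finset.prod_const]
  simp only [RCLike.ofReal_real_eq_id, id]
  exact ⟨Finset.prod_le_prod (fun i _ => sub_nonneg.2 ha) (fun i _ => hlow i),
    Finset.prod_le_prod (fun i _ => (sub_nonneg.2 ha).trans (hlow i)) (fun i _ => hup i)⟩

end Matrix.IsHermitian

section Derivatives

variable {d : ℕ}

local notation "E" => EuclideanSpace ℝ (Fin d)

lemma hessMat_eq_toMatrix₂ (U : E → ℝ) (y : E) :
    hessMat U y = LinearMap.toMatrix₂ (EuclideanSpace.basisFun (Fin d) ℝ).toBasis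
      (EuclideanSpace.basisFun (Fin d) ℝ).toBasis (fderiv ℝ (fderiv ℝ U) y).toLinearMap₁₂ := by
  ext i j
  simp [hessMat, LinearMap.toMatrix₂_apply, iteratedFDeriv_two_apply]

lemma dotProduct_hessMat_mulVec (U : E → ℝ) (y v w : E) :
    ⇑v ⬝ᵥ hessMat U y *ᵥ ⇑w = fderiv ℝ (fderiv ℝ U) y v w := by
  rw [hessMat_eq_toMatrix₂]
  exact (apply_eq_dotProduct_toMatrix₂_mulVec (EuclideanSpace.basisFun (Fin d) ℝ).toBasis
    (EuclideanSpace.basisFun (Fin d) ℝ).toBasis (fderiv ℝ (fderiv ℝ U) y).toLinearMap₁₂ v w).symm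

lemma hessMat_isSymm {U : E → ℝ} (hU : ContDiff ℝ 2 U) (y : E) : (hessMat U y).IsSymm := by
  ext i j
  simp only [transpose_apply, hessMat, iteratedFDeriv_two_apply]
  exact hU.contDiffAt.isSymmSndFDerivAt (by simp) _ _

lemma jacMat_eq_toMatrix (T : E → E) (y : E) :
    jacMat T y = LinearMap.toMatrix (EuclideanSpace.basisFun (Fin d) ℝ).toBasis
      (EuclideanSpace.basisFun (Fin d) ℝ).toBasis (fderiv ℝ T y) := by
  ext i j
  simp [jacMat, LinearMap.toMatrix_apply]

lemma jacMat_mulVec (T : E → E) (y w : E) : jacMat T y *ᵥ ⇑w = ⇑(fderiv ℝ T y w) := by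
  rw [jacMat_eq_toMatrix]
  exact LinearMap.toMatrix_mulVec_repr (EuclideanSpace.basisFun (Fin d) ℝ).toBasis
    (EuclideanSpace.basisFun (Fin d) ℝ).toBasis (fderiv ℝ T y : E →ₗ[ℝ] E) w

lemma abs_fderiv_fderiv_apply_self_le {U : E → ℝ} {y : E} {L : ℝ}
    (hU : ‖iteratedFDeriv ℝ 2 U y‖ ≤ L) (v : E) :
    |fderiv ℝ (fderiv ℝ U) y v v| ≤ L * ‖v‖ ^ 2 := by
  have hnorm : ‖fderiv ℝ (fderiv ℝ U) y‖ = ‖iteratedFDeriv ℝ 2 U y‖ := by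
    rw [← norm_iteratedFDeriv_one, norm_iteratedFDeriv_fderiv]
  calc |fderiv ℝ (fderiv ℝ U) y v v| ≤ ‖fderiv ℝ (fderiv ℝ U) y‖ * ‖v‖ * ‖v‖ :=
        (fderiv ℝ (fderiv ℝ U) y).le_opNorm₂ v v
    _ ≤ L * ‖v‖ ^ 2 := by rw [hnorm, mul_assoc, ← sq]; gcongr

lemma abs_dotProduct_jacMat_mulVec_self_le {T : E → E} {y : E} {K : ℝ}
    (hT : ‖fderiv ℝ T y‖ ≤ K) (v : E) : |⇑v ⬝ᵥ jacMat T y *ᵥ ⇑v| ≤ K * ‖v‖ ^ 2 := by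
  have hinner : ⇑v ⬝ᵥ jacMat T y *ᵥ ⇑v = inner ℝ v (fderiv ℝ T y v) := by
    simp [jacMat_mulVec, EuclideanSpace.inner_eq_star_dotProduct, dotProduct_comm]
  calc |⇑v ⬝ᵥ jacMat T y *ᵥ ⇑v| ≤ ‖v‖ * ‖fderiv ℝ T y v‖ := hinner ▸ abs_real_inner_le_norm _ _
    _ ≤ ‖v‖ * (K * ‖v‖) := by gcongr; exact (fderiv ℝ T y).le_of_opNorm_le hT v
    _ = K * ‖v‖ ^ 2 := by ring

/-- The Jacobian matrix at `y` of the step `z ↦ z - δ ∇U(z) + b T(z)`. -/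
noncomputable def stepJacobian (U : E → ℝ) (T : E → E) (δ b : ℝ) (y : E) :
    Matrix (Fin d) (Fin d) ℝ :=
  1 - δ • hessMat U y + b • jacMat T y

lemma stepJacobian_isHermitian {U : E → ℝ} {T : E → E} {y : E} (hU : ContDiff ℝ 2 U)
    (hT : (jacMat T y).IsSymm) (δ b : ℝ) : (stepJacobian U T δ b y).IsHermitian :=
  isHermitian_iff_isSymm.2 <| (isSymm_one.sub ((hessMat_isSymm hU y).smul δ)).add (hT.smul b)

lemma abs_dotProduct_stepJacobian_sub_one_mulVec_le {U : E → ℝ} {T : E → E} {y : E}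
    {L K δ b : ℝ} (hδ : 0 ≤ δ) (hb : 0 ≤ b) (hU : ‖iteratedFDeriv ℝ 2 U y‖ ≤ L)
    (hT : ‖fderiv ℝ T y‖ ≤ K) (v : E) :
    |⇑v ⬝ᵥ (stepJacobian U T δ b y - 1) *ᵥ ⇑v| ≤ (δ * L + b * K) * ‖v‖ ^ 2 := by
  have hsplit : ⇑v ⬝ᵥ (stepJacobian U T δ b y - 1) *ᵥ ⇑v
      = -(δ * fderiv ℝ (fderiv ℝ U) y v v) + b * (⇑v ⬝ᵥ jacMat T y *ᵥ ⇑v) := by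
    simp only [stepJacobian, sub_mulVec, add_mulVec, one_mulVec, smul_mulVec, dotProduct_sub,
      dotProduct_add, dotProduct_smul, dotProduct_hessMat_mulVec, smul_eq_mul]
    ring
  rw [hsplit]
  calc _ ≤ δ * |fderiv ℝ (fderiv ℝ U) y v v| + b * |⇑v ⬝ᵥ jacMat T y *ᵥ ⇑v| :=
        (abs_add_le _ _).trans_eq
          (by rw [abs_neg, abs_mul, abs_mul, abs_of_nonneg hδ, abs_of_nonneg hb])
    _ ≤ δ * (L * ‖v‖ ^ 2) + b * (K * ‖v‖ ^ 2) := by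
        gcongr
        exacts [abs_fderiv_fderiv_apply_self_le hU v, abs_dotProduct_jacMat_mulVec_self_le hT v]
    _ = (δ * L + b * K) * ‖v‖ ^ 2 := by ring

end Derivatives

lemma natCast_mul_sqrt_mul_sqrt_le {d : ℕ} {L δ : ℝ} (hL : 0 < L) (hδ0 : 0 ≤ δ)
    (hδ : δ ≤ 1 / (2 ^ 8 * d ^ 2 * L)) : d * (√δ * √L) ≤ 1 / 16 := by
  have hsq : (d : ℝ) ^ 2 * (δ * L) ≤ (1 / 16) ^ 2 := by
    rcases (Nat.cast_nonneg d : (0 : ℝ) ≤ d).eq_or_lt with hd | hd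
    · rw [← hd]; norm_num
    rw [le_div_iff₀ (by positivity)] at hδ
    nlinarith
  calc (d : ℝ) * (√δ * √L) = √((d : ℝ) ^ 2 * (δ * L)) := by
        rw [Real.sqrt_mul (by positivity), Real.sqrt_sq (by positivity), Real.sqrt_mul hδ0]
    _ ≤ √((1 / 16) ^ 2) := Real.sqrt_le_sqrt hsq
    _ = 1 / 16 := Real.sqrt_sq (by norm_num)

lemma mul_add_sqrt_two_mul_mul_sqrt_le {L δ : ℝ} (hL : 0 ≤ L) (hδ0 : 0 ≤ δ)
    (hs : √δ * √L ≤ 1 / 16) : δ * L + √(2 * δ) * √L ≤ 3 / 2 * (√δ * √L) := by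
  have hsqrt_two : √2 ≤ 23 / 16 := by
    rw [Real.sqrt_le_left (by norm_num)]; norm_num
  have hδL : δ * L = (√δ * √L) ^ 2 := by
    rw [mul_pow, Real.sq_sqrt hδ0, Real.sq_sqrt hL]
  rw [hδL, Real.sqrt_mul zero_le_two, mul_assoc]
  have := mul_nonneg (Real.sqrt_nonneg δ) (Real.sqrt_nonneg L)
  nlinarith

theorem stmt16_general {d : ℕ} (hd : 0 < d) (U : EuclideanSpace ℝ (Fin d) → ℝ)
    (L : ℝ) (hL : 0 < L) (hU : ContDiff ℝ 3 U)
    (hHess : ∀ z, ‖iteratedFDeriv ℝ 2 U z‖ ≤ L)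
    (T : EuclideanSpace ℝ (Fin d) → EuclideanSpace ℝ (Fin d))
    (hJsymm : ∀ z, (jacMat T z).IsSymm)
    (hT1 : ∀ z, ‖fderiv ℝ T z‖ ≤ Real.sqrt L)
    (δ : ℝ) (hδ0 : 0 < δ) (hδ : δ ≤ 1 / (2 ^ 8 * d ^ 2 * L))
    (x y : EuclideanSpace ℝ (Fin d)) :
    IsUnit (1 - δ • hessMat U y + Real.sqrt (2 * δ) • jacMat T y) ∧
      |((1 - δ • hessMat U y + Real.sqrt (2 * δ) • jacMat T y).det)⁻¹ - 1| ≤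
        2 * Real.sqrt δ * (d : ℝ) * Real.sqrt L * (‖x‖ ^ 2 + 1) := by
  change IsUnit (stepJacobian U T δ √(2 * δ) y) ∧ |(stepJacobian U T δ √(2 * δ) y).det⁻¹ - 1| ≤ _
  have hM := stepJacobian_isHermitian (hU.of_le (by norm_num)) (hJsymm y) δ √(2 * δ)
  set a := δ * L + √(2 * δ) * √L
  have hds := natCast_mul_sqrt_mul_sqrt_le hL hδ0.le hδ
  have hs : √δ * √L ≤ 1 / 16 :=
    (le_mul_of_one_le_left (by positivity) (by exact_mod_cast hd)).trans hds
  have has := mul_add_sqrt_two_mul_mul_sqrt_le hL.le hδ0.le hs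
  have hda : d * a ≤ 1 / 4 := by nlinarith
  have ha1 : a < 1 := by nlinarith
  have heig := hM.abs_eigenvalues_sub_one_le fun v =>
    abs_dotProduct_stepJacobian_sub_one_mulVec_le hδ0.le (Real.sqrt_nonneg _) (hHess y) (hT1 y) v
  obtain ⟨hlow, hup⟩ := hM.pow_le_det_and_det_le_pow ha1.le heig
  rw [Fintype.card_fin] at hlow hup
  obtain ⟨hdet, habs⟩ := abs_inv_sub_one_le_of_pow_bounds (by positivity) ha1 hda hlow hup
  refine ⟨(isUnit_iff_isUnit_det _).2 hdet.ne'.isUnit, habs.trans ?_⟩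
  calc 4 / 3 * (d * a) ≤ 2 * √δ * d * √L := by nlinarith
    _ ≤ 2 * √δ * d * √L * (‖x‖ ^ 2 + 1) :=
      le_mul_of_one_le_right (by positivity) (by nlinarith [sq_nonneg ‖x‖])

theorem stmt16 {d : ℕ} (hd : 0 < d) (U : EuclideanSpace ℝ (Fin d) → ℝ)
    (L : ℝ) (hL : 0 < L) (hU : ContDiff ℝ 3 U)
    (hgrad0 : gradient U 0 = 0)
    (hHess : ∀ z, ‖iteratedFDeriv ℝ 2 U z‖ ≤ L)
    (hD3U : ∀ z, ‖iteratedFDeriv ℝ 3 U z‖ ≤ L)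
    (T : EuclideanSpace ℝ (Fin d) → EuclideanSpace ℝ (Fin d))
    (hT : ContDiff ℝ 3 T)
    (hJsymm : ∀ z, (jacMat T z).IsSymm)
    (hT0 : ∀ z, ‖T z‖ ≤ Real.sqrt L * (‖z‖ + 1))
    (hT1 : ∀ z, ‖fderiv ℝ T z‖ ≤ Real.sqrt L)
    (hT2 : ∀ z, ‖iteratedFDeriv ℝ 2 T z‖ ≤ Real.sqrt L)
    (hT3 : ∀ z, ‖iteratedFDeriv ℝ 3 T z‖ ≤ Real.sqrt L)
    (δ : ℝ) (hδ0 : 0 < δ) (hδ : δ ≤ 1 / (2 ^ 8 * d ^ 2 * L))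
    (x y : EuclideanSpace ℝ (Fin d))
    (hxy : x = y - δ • gradient U y + Real.sqrt (2 * δ) • T y) :
    IsUnit (1 - δ • hessMat U y + Real.sqrt (2 * δ) • jacMat T y) ∧
      |((1 - δ • hessMat U y + Real.sqrt (2 * δ) • jacMat T y).det)⁻¹ - 1| ≤
        2 * Real.sqrt δ * (d : ℝ) * Real.sqrt L * (‖x‖ ^ 2 + 1) :=
  stmt16_general hd U L hL hU hHess T hJsymm hT1 δ hδ0 hδ x y
end

section
/- Let p : ℝ^d → ℝ be a strictly positive, three times continuously differentiable function and θ > 0 a constant such that f := log p satisfies, for all x: ‖∇³f(x)‖₂ ≤ θ, ‖∇²f(x)‖₂ ≤ θ·(‖x‖₂ + 1), and ‖∇f(x)‖₂ ≤ θ·(‖x‖₂² + 1). Then for every x ∈ ℝ^d: (1) ‖∇p(x)‖₂ ≤ p(x)·θ·(‖x‖₂² + 1); (2) ‖∇²p(x)‖₂ ≤ 2·p(x)·(θ² + θ)·(‖x‖₂⁴ + 1); (3) ‖∇³p(x)‖₂ ≤ 8·p(x)·(θ³ + θ² + θ)·(‖x‖₂⁶ + 1). -/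
/-!
Since `p = exp ∘ f`, we have `Dp = p • Df`. Differentiating this identity with the Leibniz rule
bounds `‖D^(n+1) p‖` by `∑ i ≤ n, (n choose i) ‖D^i p‖ ‖D^(n-i+1) f‖`; unrolling it for
`n = 0, 1, 2` gives `‖Dp‖ ≤ p a₁`, `‖D²p‖ ≤ p (a₂ + a₁²)` and `‖D³p‖ ≤ p (a₃ + 3 a₁ a₂ + a₁³)`
with `aₖ = ‖Dᵏ f‖`. The growth hypotheses on the `aₖ` and elementary polynomial inequalities in
`‖x‖` then give the three bounds.
-/

open Finset

theorem norm_gradient_eq_norm_fderiv {F : Type*} [NormedAddCommGroup F] [InnerProductSpace ℝ F]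
    [CompleteSpace F] (g : F → ℝ) (x : F) : ‖gradient g x‖ = ‖fderiv ℝ g x‖ :=
  (InnerProductSpace.toDual ℝ F).symm.norm_map _

theorem add_sq_le_of_le_of_le {θ s a₁ a₂ : ℝ} (hθ : 0 ≤ θ) (ha₁ : 0 ≤ a₁)
    (h₁ : a₁ ≤ θ * (s ^ 2 + 1)) (h₂ : a₂ ≤ θ * (s + 1)) :
    a₂ + a₁ ^ 2 ≤ 2 * (θ ^ 2 + θ) * (s ^ 4 + 1) := by
  have hs₁ : s + 1 ≤ 2 * (s ^ 4 + 1) := by nlinarith [sq_nonneg (s ^ 2 - 1), sq_nonneg (s - 1)]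
  have hs₂ : (s ^ 2 + 1) ^ 2 ≤ 2 * (s ^ 4 + 1) := by nlinarith [sq_nonneg (s ^ 2 - 1)]
  calc a₂ + a₁ ^ 2 ≤ θ * (s + 1) + (θ * (s ^ 2 + 1)) ^ 2 := by gcongr
    _ = θ * (s + 1) + θ ^ 2 * (s ^ 2 + 1) ^ 2 := by ring
    _ ≤ θ * (2 * (s ^ 4 + 1)) + θ ^ 2 * (2 * (s ^ 4 + 1)) := by gcongr
    _ = 2 * (θ ^ 2 + θ) * (s ^ 4 + 1) := by ring

theorem add_three_mul_add_pow_three_le_of_le {θ s a₁ a₂ a₃ : ℝ} (hθ : 0 ≤ θ)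
    (ha₁ : 0 ≤ a₁) (ha₂ : 0 ≤ a₂) (h₁ : a₁ ≤ θ * (s ^ 2 + 1)) (h₂ : a₂ ≤ θ * (s + 1))
    (h₃ : a₃ ≤ θ) :
    a₃ + 3 * a₁ * a₂ + a₁ ^ 3 ≤ 8 * (θ ^ 3 + θ ^ 2 + θ) * (s ^ 6 + 1) := by
  have hs₀ : 1 ≤ 8 * (s ^ 6 + 1) := by nlinarith [sq_nonneg (s ^ 3)]
  have hs₁ : 3 * ((s ^ 2 + 1) * (s + 1)) ≤ 8 * (s ^ 6 + 1) := by
    nlinarith [sq_nonneg (s ^ 3 - 1), sq_nonneg (s ^ 2 - 1), sq_nonneg (s - 1),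
      sq_nonneg (s ^ 3 - s), sq_nonneg (s ^ 3 - s ^ 2), sq_nonneg (s ^ 2 - s)]
  have hs₂ : (s ^ 2 + 1) ^ 3 ≤ 8 * (s ^ 6 + 1) := by
    nlinarith [sq_nonneg (s ^ 2 - 1), mul_nonneg (sq_nonneg (s ^ 2 - 1)) (sq_nonneg s)]
  calc a₃ + 3 * a₁ * a₂ + a₁ ^ 3
      ≤ θ + 3 * (θ * (s ^ 2 + 1)) * (θ * (s + 1)) + (θ * (s ^ 2 + 1)) ^ 3 := by gcongr
    _ = θ * 1 + θ ^ 2 * (3 * ((s ^ 2 + 1) * (s + 1))) + θ ^ 3 * (s ^ 2 + 1) ^ 3 := by ring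
    _ ≤ θ * (8 * (s ^ 6 + 1)) + θ ^ 2 * (8 * (s ^ 6 + 1)) + θ ^ 3 * (8 * (s ^ 6 + 1)) := by
      gcongr
    _ = 8 * (θ ^ 3 + θ ^ 2 + θ) * (s ^ 6 + 1) := by ring

section

variable {E : Type*} [NormedAddCommGroup E] [NormedSpace ℝ E]

theorem fderiv_eq_smul_fderiv_log {p : E → ℝ} (hpos : ∀ x, 0 < p x) (hp : Differentiable ℝ p) :
    fderiv ℝ p = fun x => p x • fderiv ℝ (fun y => Real.log (p y)) x := by
  funext x
  rw [fderiv.log (hp x) (hpos x).ne', smul_smul, mul_inv_cancel₀ (hpos x).ne', one_smul]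

variable {p f : E → ℝ}

theorem norm_iteratedFDeriv_succ_le_of_fderiv_eq_smul {n : ℕ}
    (hp : ContDiff ℝ n p) (hf : ContDiff ℝ (n + 1) f)
    (h : fderiv ℝ p = fun x => p x • fderiv ℝ f x) (x : E) :
    ‖iteratedFDeriv ℝ (n + 1) p x‖ ≤ ∑ i ∈ range (n + 1),
      (n.choose i : ℝ) * ‖iteratedFDeriv ℝ i p x‖ * ‖iteratedFDeriv ℝ (n - i + 1) f x‖ := by
  rw [← norm_iteratedFDeriv_fderiv, h]
  refine (norm_iteratedFDeriv_smul_le hp (hf.fderiv_right le_rfl) x le_rfl).trans_eq ?_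
  simp_rw [norm_iteratedFDeriv_fderiv]

theorem norm_iteratedFDeriv_one_le_of_fderiv_eq_smul (hp : Continuous p) (hf : ContDiff ℝ 1 f)
    (h : fderiv ℝ p = fun x => p x • fderiv ℝ f x) (x : E) :
    ‖iteratedFDeriv ℝ 1 p x‖ ≤ ‖p x‖ * ‖iteratedFDeriv ℝ 1 f x‖ := by
  simpa using norm_iteratedFDeriv_succ_le_of_fderiv_eq_smul (n := 0)
    (contDiff_zero.mpr hp) hf h x

theorem norm_iteratedFDeriv_two_le_of_fderiv_eq_smul (hp : ContDiff ℝ 1 p)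
    (hf : ContDiff ℝ 2 f) (h : fderiv ℝ p = fun x => p x • fderiv ℝ f x) (x : E) :
    ‖iteratedFDeriv ℝ 2 p x‖ ≤
      ‖p x‖ * (‖iteratedFDeriv ℝ 2 f x‖ + ‖iteratedFDeriv ℝ 1 f x‖ ^ 2) := by
  have h₁ := norm_iteratedFDeriv_one_le_of_fderiv_eq_smul hp.continuous
    (hf.of_le (by norm_num)) h x
  have h₂ := norm_iteratedFDeriv_succ_le_of_fderiv_eq_smul (n := 1) hp hf h x
  simp only [sum_range_succ, sum_range_zero, norm_iteratedFDeriv_zero, Nat.choose_zero_right,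
    Nat.choose_self, Nat.reduceSub, Nat.reduceAdd, Nat.cast_one, zero_add, one_mul] at h₂
  linear_combination h₂ + mul_le_mul_of_nonneg_right h₁ (norm_nonneg (iteratedFDeriv ℝ 1 f x))

theorem norm_iteratedFDeriv_three_le_of_fderiv_eq_smul (hp : ContDiff ℝ 2 p)
    (hf : ContDiff ℝ 3 f) (h : fderiv ℝ p = fun x => p x • fderiv ℝ f x) (x : E) :
    ‖iteratedFDeriv ℝ 3 p x‖ ≤ ‖p x‖ * (‖iteratedFDeriv ℝ 3 f x‖ +
      3 * ‖iteratedFDeriv ℝ 1 f x‖ * ‖iteratedFDeriv ℝ 2 f x‖ + ‖iteratedFDeriv ℝ 1 f x‖ ^ 3) := by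
  have h₁ := norm_iteratedFDeriv_one_le_of_fderiv_eq_smul hp.continuous
    (hf.of_le (by norm_num)) h x
  have h₂ := norm_iteratedFDeriv_two_le_of_fderiv_eq_smul (hp.of_le (by norm_num))
    (hf.of_le (by norm_num)) h x
  have h₃ := norm_iteratedFDeriv_succ_le_of_fderiv_eq_smul (n := 2) hp hf h x
  simp only [sum_range_succ, sum_range_zero, norm_iteratedFDeriv_zero, Nat.choose_zero_right,
    Nat.choose_one_right, Nat.choose_self, Nat.reduceSub, Nat.reduceAdd, Nat.cast_one,
    Nat.cast_ofNat, zero_add, one_mul] at h₃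
  linear_combination h₃ + 2 * mul_le_mul_of_nonneg_right h₁ (norm_nonneg (iteratedFDeriv ℝ 2 f x))
    + mul_le_mul_of_nonneg_right h₂ (norm_nonneg (iteratedFDeriv ℝ 1 f x))

end

theorem stmt17_general {d : ℕ} (p : EuclideanSpace ℝ (Fin d) → ℝ)
    (hppos : ∀ x, 0 < p x) (hp : ContDiff ℝ 3 p)
    (θ : ℝ) (hθ : 0 < θ)
    (f : EuclideanSpace ℝ (Fin d) → ℝ) (hf : f = fun x => Real.log (p x))
    (h3 : ∀ x, ‖iteratedFDeriv ℝ 3 f x‖ ≤ θ)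
    (h2 : ∀ x, ‖iteratedFDeriv ℝ 2 f x‖ ≤ θ * (‖x‖ + 1))
    (h1 : ∀ x, ‖gradient f x‖ ≤ θ * (‖x‖ ^ 2 + 1))
    (x : EuclideanSpace ℝ (Fin d)) :
    ‖gradient p x‖ ≤ p x * θ * (‖x‖ ^ 2 + 1) ∧
    ‖iteratedFDeriv ℝ 2 p x‖ ≤ 2 * p x * (θ ^ 2 + θ) * (‖x‖ ^ 4 + 1) ∧
    ‖iteratedFDeriv ℝ 3 p x‖ ≤ 8 * p x * (θ ^ 3 + θ ^ 2 + θ) * (‖x‖ ^ 6 + 1) := by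
  have hfp : fderiv ℝ p = fun x => p x • fderiv ℝ f x :=
    hf ▸ fderiv_eq_smul_fderiv_log hppos (hp.differentiable (by norm_num))
  have hfC : ContDiff ℝ 3 f := hf ▸ hp.log fun x => (hppos x).ne'
  have hpx : ‖p x‖ = p x := Real.norm_of_nonneg (hppos x).le
  have h1' : ‖iteratedFDeriv ℝ 1 f x‖ ≤ θ * (‖x‖ ^ 2 + 1) := by
    rw [norm_iteratedFDeriv_one, ← norm_gradient_eq_norm_fderiv]
    exact h1 x
  refine ⟨?_, ?_, ?_⟩
  · rw [norm_gradient_eq_norm_fderiv, ← norm_iteratedFDeriv_one, mul_assoc, ← hpx]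
    exact (norm_iteratedFDeriv_one_le_of_fderiv_eq_smul hp.continuous
      (hfC.of_le (by norm_num)) hfp x).trans (by gcongr)
  · calc ‖iteratedFDeriv ℝ 2 p x‖
        ≤ p x * (‖iteratedFDeriv ℝ 2 f x‖ + ‖iteratedFDeriv ℝ 1 f x‖ ^ 2) := hpx ▸
          norm_iteratedFDeriv_two_le_of_fderiv_eq_smul (hp.of_le (by norm_num))
            (hfC.of_le (by norm_num)) hfp x
      _ ≤ p x * (2 * (θ ^ 2 + θ) * (‖x‖ ^ 4 + 1)) :=
          mul_le_mul_of_nonneg_left (add_sq_le_of_le_of_le hθ.le (norm_nonneg _) h1' (h2 x))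
            (hppos x).le
      _ = 2 * p x * (θ ^ 2 + θ) * (‖x‖ ^ 4 + 1) := by ring
  · calc ‖iteratedFDeriv ℝ 3 p x‖
        ≤ p x * (‖iteratedFDeriv ℝ 3 f x‖ + 3 * ‖iteratedFDeriv ℝ 1 f x‖ *
            ‖iteratedFDeriv ℝ 2 f x‖ + ‖iteratedFDeriv ℝ 1 f x‖ ^ 3) := hpx ▸
          norm_iteratedFDeriv_three_le_of_fderiv_eq_smul (hp.of_le (by norm_num)) hfC hfp x
      _ ≤ p x * (8 * (θ ^ 3 + θ ^ 2 + θ) * (‖x‖ ^ 6 + 1)) :=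
          mul_le_mul_of_nonneg_left (add_three_mul_add_pow_three_le_of_le hθ.le (norm_nonneg _)
            (norm_nonneg _) h1' (h2 x) (h3 x)) (hppos x).le
      _ = 8 * p x * (θ ^ 3 + θ ^ 2 + θ) * (‖x‖ ^ 6 + 1) := by ring

theorem stmt17 {d : ℕ} (hd : 0 < d) (p : EuclideanSpace ℝ (Fin d) → ℝ)
    (hppos : ∀ x, 0 < p x) (hp : ContDiff ℝ 3 p)
    (θ : ℝ) (hθ : 0 < θ)
    (f : EuclideanSpace ℝ (Fin d) → ℝ) (hf : f = fun x => Real.log (p x))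
    (h3 : ∀ x, ‖iteratedFDeriv ℝ 3 f x‖ ≤ θ)
    (h2 : ∀ x, ‖iteratedFDeriv ℝ 2 f x‖ ≤ θ * (‖x‖ + 1))
    (h1 : ∀ x, ‖gradient f x‖ ≤ θ * (‖x‖ ^ 2 + 1))
    (x : EuclideanSpace ℝ (Fin d)) :
    ‖gradient p x‖ ≤ p x * θ * (‖x‖ ^ 2 + 1) ∧
    ‖iteratedFDeriv ℝ 2 p x‖ ≤ 2 * p x * (θ ^ 2 + θ) * (‖x‖ ^ 4 + 1) ∧
    ‖iteratedFDeriv ℝ 3 p x‖ ≤ 8 * p x * (θ ^ 3 + θ ^ 2 + θ) * (‖x‖ ^ 6 + 1) :=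
  stmt17_general p hppos hp θ hθ f hf h3 h2 h1 x
end
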